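/- Corollary 2 (uniqueness of the equilibrium partition): In any disclosure game, at most one ordered partition of E satisfies the Corollary-2 conditions: if (𝒜, ≤_P) and (𝒜*, ≤_P*) both satisfy them, then 𝒜 = 𝒜* and the orders ≤_P and ≤_P* coincide. -/

import Mathlib

open scoped BigOperators

universe u

/-- A disclosure game: a countable evidence space `E` with a disclosure rule
(a preorder `r`, where `r m e` means message `m` is feasible for endowment `e`)
satisfying the lower-bound condition (A4′), a prior `π0 ∈ (0,1)`, evidence
distributions `FG`, `FB` in each state, and a strictly increasing receiver
response `φ` on `[0,1]`. -/
structure DGame (E : Type u) where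
  r : E → E → Prop
  r_refl : ∀ e, r e e
  r_trans : ∀ {a b c : E}, r a b → r b c → r a c
  a4 : ∀ f : ℕ → E, (∀ n, r (f (n + 1)) (f n)) → ∃ N, ∀ n ≥ N, r (f N) (f n)
  π0 : ℝ
  π0_pos : 0 < π0
  π0_lt_one : π0 < 1
  FG : E → ℝ
  FB : E → ℝ
  FG_nonneg : ∀ e, 0 ≤ FG e
  FB_nonneg : ∀ e, 0 ≤ FB e
  FG_hasSum : HasSum FG 1
  FB_hasSum : HasSum FB 1
  FGB_pos : ∀ e, 0 < FG e + FB e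
  φ : ℝ → ℝ
  φ_mono : StrictMonoOn φ (Set.Icc (0 : ℝ) 1)

namespace DGame

variable {E : Type u} (G : DGame E)

/-- The posterior belief `ν(A)` that the state is good conditional on the
evidence lying in `A`. -/
noncomputable def nu (A : Set E) : ℝ :=
  ((∑' e : A, G.FG e) * G.π0) /
    ((∑' e : A, G.FG e) * G.π0 + (∑' e : A, G.FB e) * (1 - G.π0))

/-- `ξ(A) = φ(ν(A))`. -/
noncomputable def xi (A : Set E) : ℝ := G.φ (G.nu A)

/-- `L` is a (nonempty) lower contour set in `A`. -/
def IsLCS (A L : Set E) : Prop :=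
  L.Nonempty ∧ L ⊆ A ∧ ∀ e ∈ L, ∀ e' ∈ A, G.r e' e → e' ∈ L

/-- The Theorem-1 conditions on a candidate value function `V`. -/
def Thm1Conds (V : E → ℝ) : Prop :=
  (∀ e e', G.r e e' → V e ≤ V e') ∧
  (∀ x ∈ Set.range V, G.xi (V ⁻¹' {x}) = x) ∧
  (∀ x ∈ Set.range V, ∀ L : Set E, G.IsLCS (V ⁻¹' {x}) L → x ≤ G.xi L)

/-- A truth-leaning equilibrium `(σ, act, μ)` of the disclosure game. -/
structure Eqm where
  σ : E → E → ℝ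
  act : E → ℝ
  μ : E → ℝ
  σ_nonneg : ∀ e m, 0 ≤ σ e m
  σ_hasSum : ∀ e, HasSum (σ e) 1
  feasible : ∀ e m, 0 < σ e m → G.r m e
  μ_mem : ∀ m, μ m ∈ Set.Icc (0 : ℝ) 1
  sender_opt : ∀ e m, 0 < σ e m → ∀ m', G.r m' e → act m' ≤ act m
  receiver_opt : ∀ m, act m = G.φ (μ m)
  bayes : ∀ m, (∃ e, 0 < σ e m) →
    μ m = (∑' e : {e : E // G.r m e}, σ e.1 m * G.FG e.1 * G.π0) /
      (∑' e : {e : E // G.r m e}, σ e.1 m * (G.FG e.1 * G.π0 + G.FB e.1 * (1 - G.π0)))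
  truth_leaning : ∀ e, (∀ m, G.r m e → act m ≤ act e) → σ e e = 1
  offpath : ∀ m, (¬ ∃ e, 0 < σ e m) → μ m = G.nu {m}

/-- `V` is the sender's value function of the equilibrium `Q`. -/
def IsValueFn (Q : G.Eqm) (V : E → ℝ) : Prop :=
  ∀ e m, 0 < Q.σ e m → V e = Q.act m

end DGame

/-- An ordered partition of `E`: a partition into nonempty cells together with
a total order on the cells. -/
structure OPart (E : Type u) where
  cells : Set (Set E)
  cells_nonempty : ∀ A ∈ cells, A.Nonempty
  cover : ∀ e : E, ∃ A ∈ cells, e ∈ A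
  disj : ∀ A ∈ cells, ∀ B ∈ cells, A ≠ B → Disjoint A B
  le : Set E → Set E → Prop
  le_refl : ∀ A ∈ cells, le A A
  le_trans : ∀ A ∈ cells, ∀ B ∈ cells, ∀ C ∈ cells, le A B → le B C → le A C
  le_antisymm : ∀ A ∈ cells, ∀ B ∈ cells, le A B → le B A → A = B
  le_total : ∀ A ∈ cells, ∀ B ∈ cells, le A B ∨ le B A

/-- The Corollary-2 conditions on an ordered partition. -/
def Crl2Conds {E : Type u} (G : DGame E) (P : OPart E) : Prop :=
  (∀ A ∈ P.cells, ∀ B ∈ P.cells, P.le A B → A ≠ B → G.xi A < G.xi B) ∧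
  (∀ A ∈ P.cells, ∀ B ∈ P.cells, ∀ e₁ ∈ A, ∀ e₂ ∈ B, G.r e₁ e₂ → P.le A B) ∧
  (∀ A ∈ P.cells, ∀ L : Set E, G.IsLCS A L → G.xi A ≤ G.xi L)

/-!
For an ordered partition satisfying the conditions write `V e` for the posterior `ν` of the
cell of `e`; it is monotone along `≼`. Given two such partitions with `V e₀ < V' e₀ =: c`, let
`L` be the evidence with `V < c ≤ V'`. Cut along the cells of the second partition, each piece
of `L` is a lower contour set of its cell (`V` is monotone and `V'` constant on the cell), so
its posterior is at least `c`. Cut along a cell `A` of the first one, `A \ L` is a lower contour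
set of `A` (`V'` is monotone), so `ν(A ∩ L) ≤ ν(A) < c`. Averaging, `c ≤ ν(L) < c`. Hence
`V = V'`, and since `ν` separates and orders the cells of each partition, the two ordered
partitions agree.
-/

open Set

namespace DGame

variable {E : Type u} (G : DGame E)

def mass (e : E) : ℝ := G.FG e * G.π0 + G.FB e * (1 - G.π0)

/-- Summed over a nonempty `S` this is `(ν(S) - c) · ∑_{e ∈ S} mass e`: a countably additive
quantity whose sign compares `ν(S)` with `c`. -/
def excess (c : ℝ) (e : E) : ℝ := G.FG e * G.π0 - c * G.mass e

lemma mass_pos (e : E) : 0 < G.mass e := by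
  have hπ : 0 < 1 - G.π0 := sub_pos.2 G.π0_lt_one
  rcases (G.FG_nonneg e).eq_or_lt with hG | hG
  · have hB : 0 < G.FB e := by linarith [G.FGB_pos e]
    rw [mass, ← hG, zero_mul, zero_add]
    exact mul_pos hB hπ
  · exact add_pos_of_pos_of_nonneg (mul_pos hG G.π0_pos) (mul_nonneg (G.FB_nonneg e) hπ.le)

lemma summable_mass : Summable G.mass :=
  (G.FG_hasSum.summable.mul_right _).add (G.FB_hasSum.summable.mul_right _)

lemma summable_excess (c : ℝ) : Summable (G.excess c) :=
  (G.FG_hasSum.summable.mul_right _).sub (G.summable_mass.mul_left c)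

lemma tsum_mass_pos {S : Set E} (hS : S.Nonempty) : 0 < ∑' e : S, G.mass e :=
  (G.summable_mass.subtype S).tsum_pos (fun e => (G.mass_pos e.1).le) ⟨_, hS.some_mem⟩
    (G.mass_pos _)

lemma nu_eq_div (S : Set E) :
    G.nu S = (∑' e : S, G.FG e) * G.π0 / ∑' e : S, G.mass e := by
  have hG : Summable fun e : S => G.FG e := G.FG_hasSum.summable.subtype S
  have hB : Summable fun e : S => G.FB e := G.FB_hasSum.summable.subtype S
  simp only [nu, mass]
  rw [(hG.mul_right _).tsum_add (hB.mul_right _), tsum_mul_right, tsum_mul_right]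

lemma tsum_excess {S : Set E} (hS : S.Nonempty) (c : ℝ) :
    ∑' e : S, G.excess c e = (G.nu S - c) * ∑' e : S, G.mass e := by
  have hpos := G.tsum_mass_pos hS
  have hG : Summable fun e : S => G.FG e := G.FG_hasSum.summable.subtype S
  have hM : Summable fun e : S => G.mass e := G.summable_mass.subtype S
  simp only [excess]
  rw [(hG.mul_right _).tsum_sub (hM.mul_left c), tsum_mul_left, tsum_mul_right, nu_eq_div]
  field_simp

lemma le_nu_iff {S : Set E} (hS : S.Nonempty) {c : ℝ} :
    c ≤ G.nu S ↔ 0 ≤ ∑' e : S, G.excess c e := by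
  rw [G.tsum_excess hS, mul_nonneg_iff_of_pos_right (G.tsum_mass_pos hS), sub_nonneg]

lemma nu_lt_iff {S : Set E} (hS : S.Nonempty) {c : ℝ} :
    G.nu S < c ↔ ∑' e : S, G.excess c e < 0 := by
  simpa only [not_le] using (G.le_nu_iff hS).not

lemma nu_mem_Icc (S : Set E) : G.nu S ∈ Icc (0 : ℝ) 1 := by
  have hg : 0 ≤ (∑' e : S, G.FG e) * G.π0 :=
    mul_nonneg (tsum_nonneg fun e => G.FG_nonneg e) G.π0_pos.le
  have hb : 0 ≤ (∑' e : S, G.FB e) * (1 - G.π0) :=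
    mul_nonneg (tsum_nonneg fun e => G.FB_nonneg e) (sub_nonneg.2 G.π0_lt_one.le)
  exact ⟨div_nonneg hg (add_nonneg hg hb), div_le_one_of_le₀ (le_add_of_nonneg_right hb)
    (add_nonneg hg hb)⟩

lemma xi_lt_xi_iff {A B : Set E} : G.xi A < G.xi B ↔ G.nu A < G.nu B :=
  G.φ_mono.lt_iff_lt (G.nu_mem_Icc A) (G.nu_mem_Icc B)

lemma xi_le_xi_iff {A B : Set E} : G.xi A ≤ G.xi B ↔ G.nu A ≤ G.nu B :=
  G.φ_mono.le_iff_le (G.nu_mem_Icc A) (G.nu_mem_Icc B)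

lemma nu_le_of_le_nu_diff {S T : Set E} (hTS : T ⊆ S) (hT : T.Nonempty) (hR : (S \ T).Nonempty)
    (h : G.nu S ≤ G.nu (S \ T)) : G.nu T ≤ G.nu S := by
  have hsplit : ∑' e : S, G.excess (G.nu S) e =
      ∑' e : T, G.excess (G.nu S) e + ∑' e : ↥(S \ T), G.excess (G.nu S) e := by
    rw [← Summable.tsum_union_disjoint disjoint_sdiff_right
      ((G.summable_excess _).subtype _) ((G.summable_excess _).subtype _),
      union_sdiff_cancel hTS]
  have hS : ∑' e : S, G.excess (G.nu S) e = 0 := by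
    rw [G.tsum_excess (hT.mono hTS), sub_self, zero_mul]
  have hRnonneg := (G.le_nu_iff hR).1 h
  have hT' : (G.nu T - G.nu S) * ∑' e : T, G.mass e ≤ 0 := by
    rw [← G.tsum_excess hT]
    linarith
  exact sub_nonpos.1 (nonpos_of_mul_nonpos_left hT' (G.tsum_mass_pos hT))

end DGame

namespace OPart

variable {E : Type u} (P : OPart E)

noncomputable def cell (e : E) : Set E := (P.cover e).choose

lemma cell_mem (e : E) : P.cell e ∈ P.cells := (P.cover e).choose_spec.1

lemma mem_cell (e : E) : e ∈ P.cell e := (P.cover e).choose_spec.2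

lemma cell_eq_iff {A : Set E} (hA : A ∈ P.cells) {e : E} : P.cell e = A ↔ e ∈ A := by
  refine ⟨fun h => h ▸ P.mem_cell e, fun he => ?_⟩
  by_contra hne
  exact disjoint_left.1 (P.disj _ (P.cell_mem e) A hA hne) (P.mem_cell e) he

lemma hasSum_tsum_inter {f : E → ℝ} (hf : Summable f) (S : Set E) :
    HasSum (fun B : P.cells => ∑' e : ↥(B.1 ∩ S), f e) (∑' e : S, f e) := by
  have h := (hf.indicator S).hasSum.tsum_fiberwise fun e => (⟨P.cell e, P.cell_mem e⟩ : P.cells)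
  have hfiber (B : P.cells) :
      (fun e => (⟨P.cell e, P.cell_mem e⟩ : P.cells)) ⁻¹' {B} = B.1 := by
    ext e
    simp only [mem_preimage, mem_singleton_iff, Subtype.ext_iff]
    exact P.cell_eq_iff B.2
  simp only [hfiber, tsum_subtype, indicator_indicator] at h
  simpa only [tsum_subtype] using h

end OPart

namespace Crl2Conds

variable {E : Type u} {G : DGame E} {P : OPart E}

lemma nu_lt (h : Crl2Conds G P) {A B : Set E} (hA : A ∈ P.cells) (hB : B ∈ P.cells)
    (hle : P.le A B) (hne : A ≠ B) : G.nu A < G.nu B :=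
  G.xi_lt_xi_iff.1 (h.1 A hA B hB hle hne)

lemma le_iff_nu_le (h : Crl2Conds G P) {A B : Set E} (hA : A ∈ P.cells) (hB : B ∈ P.cells) :
    P.le A B ↔ G.nu A ≤ G.nu B := by
  refine ⟨fun hle => ?_, fun hnu => ?_⟩
  · rcases eq_or_ne A B with rfl | hne
    · exact le_rfl
    · exact (h.nu_lt hA hB hle hne).le
  · rcases eq_or_ne A B with rfl | hne
    · exact P.le_refl A hA
    refine (P.le_total A hA B hB).resolve_right fun hle => ?_
    exact (h.nu_lt hB hA hle hne.symm).not_ge hnu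

lemma eq_of_nu_eq (h : Crl2Conds G P) {A B : Set E} (hA : A ∈ P.cells) (hB : B ∈ P.cells)
    (hnu : G.nu A = G.nu B) : A = B :=
  P.le_antisymm A hA B hB ((h.le_iff_nu_le hA hB).2 hnu.le) ((h.le_iff_nu_le hB hA).2 hnu.ge)

lemma nu_cell_mono (h : Crl2Conds G P) {e e' : E} (hr : G.r e' e) :
    G.nu (P.cell e') ≤ G.nu (P.cell e) :=
  (h.le_iff_nu_le (P.cell_mem e') (P.cell_mem e)).1 <|
    h.2.1 _ (P.cell_mem e') _ (P.cell_mem e) e' (P.mem_cell e') e (P.mem_cell e) hr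

lemma nu_le_of_isLCS (h : Crl2Conds G P) {A L : Set E} (hA : A ∈ P.cells)
    (hL : G.IsLCS A L) : G.nu A ≤ G.nu L :=
  G.xi_le_xi_iff.1 (h.2.2 A hA L hL)

end Crl2Conds

section Uniqueness

variable {E : Type u} {G : DGame E} {P P' : OPart E}

def crossing (G : DGame E) (P P' : OPart E) (c : ℝ) : Set E :=
  {e | G.nu (P.cell e) < c ∧ c ≤ G.nu (P'.cell e)}

lemma le_nu_cell_inter_crossing (hP : Crl2Conds G P) (hP' : Crl2Conds G P') {c : ℝ} {x : E}
    (hx : x ∈ crossing G P P' c) : c ≤ G.nu (P'.cell x ∩ crossing G P P' c) := by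
  have hLCS : G.IsLCS (P'.cell x) (P'.cell x ∩ crossing G P P' c) := by
    refine ⟨⟨x, P'.mem_cell x, hx⟩, inter_subset_left, fun a ha a' ha' hr =>
      ⟨ha', ?_, ?_⟩⟩
    · exact (hP.nu_cell_mono hr).trans_lt ha.2.1
    · rw [(P'.cell_eq_iff (P'.cell_mem x)).2 ha']
      exact hx.2
  exact hx.2.trans (hP'.nu_le_of_isLCS (P'.cell_mem x) hLCS)

lemma nu_cell_inter_crossing_lt (hP : Crl2Conds G P) (hP' : Crl2Conds G P') {c : ℝ} {x : E}
    (hx : x ∈ crossing G P P' c) : G.nu (P.cell x ∩ crossing G P P' c) < c := by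
  set T := P.cell x ∩ crossing G P P' c
  refine lt_of_le_of_lt ?_ hx.1
  rcases (P.cell x \ T).eq_empty_or_nonempty with hR | hR
  · rw [show T = P.cell x from subset_antisymm inter_subset_left (sdiff_eq_empty.1 hR)]
  have hLCS : G.IsLCS (P.cell x) (P.cell x \ T) := by
    refine ⟨hR, sdiff_subset, fun a ha a' ha' hr => ⟨ha', fun ha'T => ?_⟩⟩
    have hcell : P.cell a = P.cell x := (P.cell_eq_iff (P.cell_mem x)).2 ha.1
    have hlt : G.nu (P'.cell a) < c := not_le.1 fun hc => ha.2 ⟨ha.1, hcell ▸ hx.1, hc⟩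
    exact (hP'.nu_cell_mono hr).trans_lt hlt |>.not_ge ha'T.2.2
  exact G.nu_le_of_le_nu_diff inter_subset_left ⟨x, P.mem_cell x, hx⟩ hR
    (hP.nu_le_of_isLCS (P.cell_mem x) hLCS)

lemma tsum_excess_crossing_nonneg (hP : Crl2Conds G P) (hP' : Crl2Conds G P') (c : ℝ) :
    0 ≤ ∑' e : crossing G P P' c, G.excess c e := by
  refine HasSum.nonneg (fun B => ?_) (P'.hasSum_tsum_inter (G.summable_excess c) _)
  rcases (B.1 ∩ crossing G P P' c).eq_empty_or_nonempty with hB | ⟨x, hxB, hx⟩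
  · simp [hB]
  rw [← (P'.cell_eq_iff B.2).2 hxB]
  exact (G.le_nu_iff (by exact ⟨x, P'.mem_cell x, hx⟩)).1 (le_nu_cell_inter_crossing hP hP' hx)

lemma tsum_excess_crossing_neg (hP : Crl2Conds G P) (hP' : Crl2Conds G P') {c : ℝ} {x : E}
    (hx : x ∈ crossing G P P' c) : ∑' e : crossing G P P' c, G.excess c e < 0 := by
  have hpiece (y : E) (hy : y ∈ crossing G P P' c) :
      ∑' e : ↥(P.cell y ∩ crossing G P P' c), G.excess c e < 0 :=
    (G.nu_lt_iff (by exact ⟨y, P.mem_cell y, hy⟩)).1 (nu_cell_inter_crossing_lt hP hP' hy)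
  refine hasSum_lt (f := fun B : P.cells => ∑' e : ↥(B.1 ∩ crossing G P P' c), G.excess c e)
    (g := 0) (i := ⟨P.cell x, P.cell_mem x⟩) (fun B => ?_) (hpiece x hx)
    (P.hasSum_tsum_inter (G.summable_excess c) _) hasSum_zero
  rcases (B.1 ∩ crossing G P P' c).eq_empty_or_nonempty with hB | ⟨y, hyB, hy⟩
  · simp [hB]
  dsimp only [Pi.zero_apply]
  rw [← (P.cell_eq_iff B.2).2 hyB]
  exact (hpiece y hy).le

lemma nu_cell_le (hP : Crl2Conds G P) (hP' : Crl2Conds G P') (e : E) :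
    G.nu (P'.cell e) ≤ G.nu (P.cell e) :=
  not_lt.1 fun hlt => (tsum_excess_crossing_nonneg hP hP' _).not_gt
    (tsum_excess_crossing_neg hP hP' (x := e) ⟨hlt, le_rfl⟩)

lemma cell_eq_cell (hP : Crl2Conds G P) (hP' : Crl2Conds G P') (e : E) :
    P.cell e = P'.cell e := by
  have hnu (a : E) : G.nu (P.cell a) = G.nu (P'.cell a) :=
    le_antisymm (nu_cell_le hP' hP a) (nu_cell_le hP hP' a)
  ext a
  rw [← P.cell_eq_iff (P.cell_mem e), ← P'.cell_eq_iff (P'.cell_mem e)]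
  constructor
  · intro ha
    exact hP'.eq_of_nu_eq (P'.cell_mem a) (P'.cell_mem e) (by rw [← hnu, ← hnu, ha])
  · intro ha
    exact hP.eq_of_nu_eq (P.cell_mem a) (P.cell_mem e) (by rw [hnu, hnu, ha])

lemma cells_eq (hP : Crl2Conds G P) (hP' : Crl2Conds G P') : P.cells = P'.cells := by
  suffices key : ∀ {Q Q' : OPart E}, Crl2Conds G Q → Crl2Conds G Q' →
      Q.cells ⊆ Q'.cells from (key hP hP').antisymm (key hP' hP)
  intro Q Q' hQ hQ' A hA
  obtain ⟨e, he⟩ := Q.cells_nonempty A hA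
  rw [← (Q.cell_eq_iff hA).2 he, cell_eq_cell hQ hQ']
  exact Q'.cell_mem e

end Uniqueness

theorem stmt_5_general {E : Type u} (G : DGame E) (P P' : OPart E)
    (h : Crl2Conds G P) (h' : Crl2Conds G P') :
    P.cells = P'.cells ∧ ∀ A ∈ P.cells, ∀ B ∈ P.cells, (P.le A B ↔ P'.le A B) := by
  have hcells := cells_eq h h'
  refine ⟨hcells, fun A hA B hB => ?_⟩
  rw [h.le_iff_nu_le hA hB, h'.le_iff_nu_le (hcells ▸ hA) (hcells ▸ hB)]

/-- Corollary 2 (uniqueness of the equilibrium partition): at most one ordered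
partition satisfies the Corollary-2 conditions. -/
theorem stmt_5 {E : Type u} [Countable E] (G : DGame E) (P P' : OPart E)
    (h : Crl2Conds G P) (h' : Crl2Conds G P') :
    P.cells = P'.cells ∧ ∀ A ∈ P.cells, ∀ B ∈ P.cells, (P.le A B ↔ P'.le A B) :=
  stmt_5_general G P P' h h'
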